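/- Let g be the probability mass function of a sum of m independent Bernoulli random variables. Then g is log-concave: for every integer k, g_k² ≥ g_{k-1}·g_{k+1}. -/

import Mathlib

/-!
Adding one more Bernoulli variable with parameter `q` maps the mass function `f` to
`k ↦ (1 - q) f k + q f (k - 1)`, starting from the point mass at `0`. Log-concavity alone is not
obviously preserved by this step, but the stronger two-index inequality
`f (a - 1) f (b + 1) ≤ f a f b` for `a ≤ b` is: expanding both sides, the `(1 - q)²`, `q²` and
`q (1 - q)` terms are compared by three instances of the inequality for `f`.
-/

open Finset

/-- Probability mass function of a sum of independent Bernoulli random variables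
indexed by the finite set `I`, with parameters `p i`. -/
def bernoulliSumPMF (I : Finset ℕ) (p : ℕ → ℝ) (k : ℤ) : ℝ :=
  if 0 ≤ k then
    ∑ S ∈ I.powersetCard k.toNat, (∏ i ∈ S, p i) * (∏ i ∈ I \ S, (1 - p i))
  else 0

/-- The adjacent-gap case of the Pólya frequency (PF₂) condition. -/
def WideLogConcave (f : ℤ → ℝ) : Prop :=
  ∀ a b, a ≤ b → f (a - 1) * f (b + 1) ≤ f a * f b

theorem WideLogConcave.mul_self_ge {f : ℤ → ℝ} (hf : WideLogConcave f) (k : ℤ) :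
    f (k - 1) * f (k + 1) ≤ f k ^ 2 := by
  simpa [sq] using hf k k le_rfl

theorem wideLogConcave_indicator_zero :
    WideLogConcave fun k => if k = 0 then 1 else 0 := by
  intro a b hab
  dsimp only
  have hpos : (0 : ℝ) ≤ (if a = 0 then 1 else 0) * (if b = 0 then 1 else 0) := by
    split_ifs <;> norm_num
  refine le_trans (le_of_eq ?_) hpos
  split_ifs <;> first | omega | simp

theorem WideLogConcave.add_shift {f : ℤ → ℝ} (hf : WideLogConcave f) {u v : ℝ}
    (hu : 0 ≤ u) (hv : 0 ≤ v) :
    WideLogConcave fun k => u * f k + v * f (k - 1) := by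
  intro a b hab
  have hmid : f (a - 1) * f b ≤ f a * f (b - 1) ∨ a = b := by
    rcases hab.lt_or_eq with hlt | heq
    · exact .inl (by simpa using hf a (b - 1) (by omega))
    · exact .inr heq
  -- the `u * v` cross term: `f (a - 2) * f (b + 1) ≤ f (a - 1) * f b ≤ f a * f (b - 1)`
  have hcross : f (a - 1 - 1) * f (b + 1) ≤ f a * f (b - 1) := by
    rcases hmid with hmid | rfl
    · simpa using (hf (a - 1) b (by omega)).trans hmid
    · simpa [mul_comm] using hf (a - 1) a (by omega)
  have huu := mul_le_mul_of_nonneg_left (hf a b hab) (mul_nonneg hu hu)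
  have hvv := mul_le_mul_of_nonneg_left (hf (a - 1) (b - 1) (by omega)) (mul_nonneg hv hv)
  have huv := mul_le_mul_of_nonneg_left hcross (mul_nonneg hu hv)
  simp only [sub_add_cancel, add_sub_cancel_right] at huu hvv huv ⊢
  nlinarith

def bernoulliWeight (I : Finset ℕ) (p : ℕ → ℝ) (S : Finset ℕ) : ℝ :=
  (∏ i ∈ S, p i) * ∏ i ∈ I \ S, (1 - p i)

section Insert

variable {I S : Finset ℕ} {j : ℕ} (p : ℕ → ℝ)

theorem bernoulliWeight_insert_of_subset (hj : j ∉ I) (hS : S ⊆ I) :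
    bernoulliWeight (insert j I) p S = (1 - p j) * bernoulliWeight I p S := by
  have hjS : j ∉ S := fun h => hj (hS h)
  rw [bernoulliWeight, bernoulliWeight, insert_sdiff_of_notMem _ hjS,
    prod_insert (fun h => hj (mem_sdiff.mp h).1)]
  ring

theorem bernoulliWeight_insert_insert (hj : j ∉ I) (hS : S ⊆ I) :
    bernoulliWeight (insert j I) p (insert j S) = p j * bernoulliWeight I p S := by
  have hjS : j ∉ S := fun h => hj (hS h)
  rw [bernoulliWeight, bernoulliWeight, prod_insert hjS, insert_sdiff_insert,
    sdiff_insert_of_notMem hj]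
  ring

theorem sum_powersetCard_succ_insert_bernoulliWeight (hj : j ∉ I) (n : ℕ) :
    ∑ S ∈ (insert j I).powersetCard (n + 1), bernoulliWeight (insert j I) p S =
      (1 - p j) * ∑ S ∈ I.powersetCard (n + 1), bernoulliWeight I p S +
        p j * ∑ S ∈ I.powersetCard n, bernoulliWeight I p S := by
  have hdisj : Disjoint (I.powersetCard (n + 1)) ((I.powersetCard n).image (insert j)) := by
    refine disjoint_left.mpr fun S hS hS' => ?_
    obtain ⟨T, -, rfl⟩ := mem_image.mp hS'
    exact hj ((mem_powersetCard.mp hS).1 (mem_insert_self j T))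
  have hinj : Set.InjOn (insert j) (I.powersetCard n : Set (Finset ℕ)) := fun S hS T hT h =>
    by simpa [erase_insert fun h => hj ((mem_powersetCard.mp hS).1 h),
      erase_insert fun h => hj ((mem_powersetCard.mp hT).1 h)] using congrArg (erase · j) h
  rw [powersetCard_succ_insert hj, sum_union hdisj, sum_image hinj, mul_sum, mul_sum]
  congr 1 <;> refine sum_congr rfl fun S hS => ?_
  · exact bernoulliWeight_insert_of_subset p hj (mem_powersetCard.mp hS).1
  · exact bernoulliWeight_insert_insert p hj (mem_powersetCard.mp hS).1

theorem bernoulliSumPMF_insert (hj : j ∉ I) (k : ℤ) :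
    bernoulliSumPMF (insert j I) p k =
      (1 - p j) * bernoulliSumPMF I p k + p j * bernoulliSumPMF I p (k - 1) := by
  rcases lt_trichotomy k 0 with hk | rfl | hk
  · simp only [bernoulliSumPMF, if_neg hk.not_ge, if_neg (show ¬(0 : ℤ) ≤ k - 1 by omega),
      mul_zero, add_zero]
  · simp only [bernoulliSumPMF, le_refl, if_true, show ¬(0 : ℤ) ≤ 0 - 1 by omega, if_false,
      Int.toNat_zero, powersetCard_zero, sum_singleton, mul_zero, add_zero]
    exact bernoulliWeight_insert_of_subset p hj (empty_subset I)
  · obtain ⟨n, rfl⟩ : ∃ n : ℕ, k = n + 1 := ⟨k.toNat - 1, by omega⟩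
    have hn : ((n : ℤ) + 1).toNat = n + 1 := by omega
    simp only [bernoulliSumPMF, show (0 : ℤ) ≤ n + 1 by omega, if_true, hn,
      add_sub_cancel_right, Int.toNat_natCast]
    exact sum_powersetCard_succ_insert_bernoulliWeight p hj n

end Insert

theorem bernoulliSumPMF_empty (p : ℕ → ℝ) :
    bernoulliSumPMF ∅ p = fun k => if k = 0 then 1 else 0 := by
  funext k
  rcases lt_trichotomy k 0 with hk | rfl | hk
  · simp [bernoulliSumPMF, hk.not_ge, hk.ne]
  · simp [bernoulliSumPMF]
  · have hempty : (∅ : Finset ℕ).powersetCard k.toNat = ∅ :=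
      powersetCard_eq_empty.mpr (by simp; omega)
    simp [bernoulliSumPMF, hk.le, hk.ne', hempty]

theorem wideLogConcave_bernoulliSumPMF {I : Finset ℕ} {p : ℕ → ℝ}
    (hp : ∀ i ∈ I, 0 ≤ p i ∧ p i ≤ 1) : WideLogConcave (bernoulliSumPMF I p) := by
  induction I using Finset.induction_on with
  | empty => exact bernoulliSumPMF_empty p ▸ wideLogConcave_indicator_zero
  | insert j I hj ih =>
    obtain ⟨hpj₀, hpj₁⟩ := hp j (mem_insert_self j I)
    rw [funext (bernoulliSumPMF_insert p hj)]
    exact (ih fun i hi => hp i (mem_insert_of_mem hi)).add_shift (sub_nonneg.mpr hpj₁) hpj₀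

theorem bernoulli_sum_log_concave (m : ℕ) (p : ℕ → ℝ)
    (hp : ∀ i ∈ Finset.range m, 0 ≤ p i ∧ p i ≤ 1)
    (g : ℤ → ℝ) (hg : ∀ k, g k = bernoulliSumPMF (Finset.range m) p k) (k : ℤ) :
    g (k - 1) * g (k + 1) ≤ g k ^ 2 := by
  simpa only [hg] using (wideLogConcave_bernoulliSumPMF hp).mul_self_ge k
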